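/- For every Borel set E ⊆ [0,1), the Erdős measure satisfies μ(T⁻¹E) = (1/2)(μ(E) + μ(E + λ⁻² mod 1)), where E + λ⁻² mod 1 denotes the image of E under the rotation x ↦ x + λ⁻² (mod 1) of the circle ℝ/ℤ identified with [0,1). -/

import Mathlib

open MeasureTheory Filter Topology
open scoped ENNReal

/-- The golden ratio λ = (1+√5)/2. -/
noncomputable def gold : ℝ := (1 + Real.sqrt 5) / 2

/-- `p` is the Bernoulli (1/2,1/2) product measure on `{0,1}^ℕ`, characterized by its
values on cylinder sets. -/
def IsCoinMeasure (p : Measure (ℕ → Bool)) : Prop :=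
  ∀ (s : Finset ℕ) (b : ℕ → Bool), p {ε | ∀ i ∈ s, ε i = b i} = (2 : ℝ≥0∞)⁻¹ ^ s.card

/-- π(ε) = Σ_{k=1}^∞ ε_k λ^{-k-1} (indices shifted so that `ε k` is `ε_{k+1}`). -/
noncomputable def piMap (ε : ℕ → Bool) : ℝ := ∑' k : ℕ, if ε k then gold⁻¹ ^ (k + 2) else 0

/-- The Erdős measure: the pushforward of the coin measure `p` under `piMap`. -/
noncomputable def erdosOf (p : Measure (ℕ → Bool)) : Measure ℝ := p.map piMap

lemma sqrt5_sq' : Real.sqrt 5 ^ 2 = 5 := Real.sq_sqrt (by norm_num)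

lemma g_gt_one : 1 < gold := by
  have h : (2:ℝ) ≤ Real.sqrt 5 := by
    nlinarith [sqrt5_sq', Real.sqrt_nonneg 5]
  unfold gold; linarith

lemma g_pos : 0 < gold := lt_trans one_pos g_gt_one
lemma g_ne : gold ≠ 0 := ne_of_gt g_pos

lemma g_sq : gold ^ 2 = gold + 1 := by
  unfold gold
  have h := sqrt5_sq'
  field_simp
  nlinarith [h]

lemma ginv_pos : 0 < gold⁻¹ := inv_pos.2 g_pos
lemma ginv_lt_one : gold⁻¹ < 1 := inv_lt_one_of_one_lt₀ g_gt_one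

lemma ginv_add_sq : gold⁻¹ + gold⁻¹ ^ 2 = 1 := by
  have h := g_sq
  have h0 := g_ne
  field_simp
  nlinarith [h]

lemma summable_geo' : Summable (fun k : ℕ => gold⁻¹ ^ (k + 2)) := by
  have h : Summable (fun k : ℕ => gold⁻¹ ^ k) :=
    summable_geometric_of_lt_one (le_of_lt ginv_pos) ginv_lt_one
  have := h.mul_right (gold⁻¹ ^ 2)
  refine this.congr fun k => ?_
  rw [pow_add]

lemma tsum_geo' : ∑' k : ℕ, gold⁻¹ ^ (k + 2) = 1 := by
  have h : ∑' k : ℕ, gold⁻¹ ^ k = (1 - gold⁻¹)⁻¹ :=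
    tsum_geometric_of_lt_one (le_of_lt ginv_pos) ginv_lt_one
  have h2 : (1:ℝ) - gold⁻¹ = gold⁻¹ ^ 2 := by linarith [ginv_add_sq]
  have h3 : gold⁻¹ ^ 2 ≠ 0 := ne_of_gt (pow_pos ginv_pos 2)
  calc ∑' k : ℕ, gold⁻¹ ^ (k + 2) = ∑' k : ℕ, gold⁻¹ ^ k * gold⁻¹ ^ 2 := by
        congr 1; funext k; rw [pow_add]
    _ = (1 - gold⁻¹)⁻¹ * gold⁻¹ ^ 2 := by rw [tsum_mul_right, h]
    _ = 1 := by rw [h2, inv_mul_cancel₀ h3]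

lemma summable_piMapTerm (ε : ℕ → Bool) :
    Summable (fun k : ℕ => if ε k then gold⁻¹ ^ (k + 2) else 0) := by
  refine Summable.of_nonneg_of_le (fun k => ?_) (fun k => ?_) summable_geo'
  · split
    · exact pow_nonneg (le_of_lt ginv_pos) _
    · exact le_refl 0
  · split
    · exact le_refl _
    · exact pow_nonneg (le_of_lt ginv_pos) _

lemma piMap_nonneg (ε : ℕ → Bool) : 0 ≤ piMap ε := by
  refine tsum_nonneg fun k => ?_
  by_cases h : ε k = true <;> simp [h, pow_nonneg g_pos.le, pow_nonneg ginv_pos.le]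

lemma piMap_le_one (ε : ℕ → Bool) : piMap ε ≤ 1 := by
  rw [piMap, ← tsum_geo']
  refine Summable.tsum_le_tsum (fun k => ?_) (summable_piMapTerm ε) summable_geo'
  split
  · exact le_refl _
  · exact pow_nonneg (le_of_lt ginv_pos) _

lemma piMap_lt_one {ε : ℕ → Bool} {j : ℕ} (h : ε j = false) : piMap ε < 1 := by
  rw [piMap, ← tsum_geo']
  refine Summable.tsum_lt_tsum_of_nonneg (i := j) (fun k => ?_) (fun k => ?_) ?_ summable_geo'
  · split
    · exact pow_nonneg (le_of_lt ginv_pos) _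
    · exact le_refl 0
  · split
    · exact le_refl _
    · exact pow_nonneg (le_of_lt ginv_pos) _
  · rw [h]; simp only [Bool.false_eq_true, if_false]; exact pow_pos ginv_pos _

lemma piMap_rec (ε : ℕ → Bool) :
    piMap ε = (if ε 0 then gold⁻¹ ^ 2 else 0) + gold⁻¹ * piMap (fun k => ε (k + 1)) := by
  rw [piMap, (summable_piMapTerm ε).tsum_eq_zero_add]
  congr 1
  rw [piMap, ← tsum_mul_left]
  congr 1; funext k
  by_cases h : ε (k + 1) = true <;> simp [h] <;> ring

lemma measurable_piMap : Measurable piMap := by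
  have hmeas : ∀ n : ℕ, Measurable (fun ε : ℕ → Bool =>
      ∑ k ∈ Finset.range n, if ε k then gold⁻¹ ^ (k + 2) else 0) := by
    intro n
    refine Finset.measurable_sum _ fun k _ => ?_
    exact Measurable.comp (measurable_from_top
      (f := fun b : Bool => if b then gold⁻¹ ^ (k + 2) else 0)) (measurable_pi_apply k)
  refine measurable_of_tendsto_metrizable hmeas ?_
  rw [tendsto_pi_nhds]
  intro ε
  exact (summable_piMapTerm ε).hasSum.tendsto_sum_nat

def Cyl : Set (Set (ℕ → Bool)) :=
  {S | ∃ (s : Finset ℕ) (b : ℕ → Bool), S = {ε | ∀ i ∈ s, ε i = b i}}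

lemma isPiSystem_Cyl : IsPiSystem Cyl := by
  rintro _ ⟨s, b, rfl⟩ _ ⟨t, c, rfl⟩ ⟨ε₀, hb, hc⟩
  refine ⟨s ∪ t, fun i => if i ∈ s then b i else c i, ?_⟩
  have hagree : ∀ i ∈ s, i ∈ t → b i = c i := fun i hs ht => by
    rw [← hb i hs, ← hc i ht]
  ext ε
  simp only [Set.mem_inter_iff, Set.mem_setOf_eq, Finset.mem_union]
  constructor
  · rintro ⟨h1, h2⟩ i hi
    by_cases hs : i ∈ s
    · simp [hs, h1 i hs]
    · rcases hi with hi | hi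
      · exact absurd hi hs
      · simp [hs, h2 i hi]
  · intro h
    constructor
    · intro i hi
      have := h i (Or.inl hi)
      simpa [hi] using this
    · intro i hi
      have := h i (Or.inr hi)
      by_cases hs : i ∈ s
      · simpa [hs, ← hagree i hs hi] using this
      · simpa [hs] using this

lemma cyl_measurableSet {s : Finset ℕ} {b : ℕ → Bool} :
    MeasurableSet {ε : ℕ → Bool | ∀ i ∈ s, ε i = b i} := by
  have : {ε : ℕ → Bool | ∀ i ∈ s, ε i = b i} = ⋂ i ∈ s, {ε : ℕ → Bool | ε i = b i} := by
    ext ε; simp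
  rw [this]
  refine MeasurableSet.biInter s.countable_toSet fun i _ => ?_
  have h2 : {ε : ℕ → Bool | ε i = b i} = (fun f : ℕ → Bool => f i) ⁻¹' {b i} := rfl
  rw [h2]
  exact (measurable_pi_apply i) (measurableSet_singleton (b i))

lemma generateFrom_Cyl :
    MeasurableSpace.generateFrom Cyl = (inferInstance : MeasurableSpace (ℕ → Bool)) := by
  refine le_antisymm ?_ ?_
  · refine MeasurableSpace.generateFrom_le ?_
    rintro _ ⟨s, b, rfl⟩
    exact cyl_measurableSet
  · have : (inferInstance : MeasurableSpace (ℕ → Bool)) = MeasurableSpace.pi := rfl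
    rw [this, MeasurableSpace.pi]
    refine iSup_le fun i => ?_
    rw [← measurable_iff_comap_le]
    intro t _
    have ht : (fun ε : ℕ → Bool => ε i) ⁻¹' t = ⋃ b ∈ t, {ε : ℕ → Bool | ε i = b} := by
      ext ε; simp [eq_comm]
    rw [ht]
    exact MeasurableSet.biUnion t.to_countable fun b _ =>
      MeasurableSpace.measurableSet_generateFrom ⟨{i}, fun _ => b, by ext ε; simp⟩

lemma measurable_shift : Measurable (fun (ε : ℕ → Bool) (k : ℕ) => ε (k + 1)) :=
  measurable_pi_lambda _ fun k => measurable_pi_apply (k + 1)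

lemma coin_univ {p : Measure (ℕ → Bool)} (hp : IsCoinMeasure p) : p Set.univ = 1 := by
  have := hp ∅ (fun _ => true)
  simpa using this

lemma coin_shift {p : Measure (ℕ → Bool)} (hp : IsCoinMeasure p) (b : Bool)
    {A : Set (ℕ → Bool)} (hA : MeasurableSet A) :
    p ({ε | ε 0 = b} ∩ (fun (ε : ℕ → Bool) (k : ℕ) => ε (k + 1)) ⁻¹' A) = 2⁻¹ * p A := by
  haveI : IsProbabilityMeasure p := ⟨coin_univ hp⟩
  have hS : MeasurableSet {ε : ℕ → Bool | ε 0 = b} := by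
    have h2 : {ε : ℕ → Bool | ε 0 = b} = (fun f : ℕ → Bool => f 0) ⁻¹' {b} := rfl
    rw [h2]
    exact (measurable_pi_apply 0) (measurableSet_singleton b)
  set σ : (ℕ → Bool) → (ℕ → Bool) := fun ε k => ε (k + 1) with hσdef
  set q : Measure (ℕ → Bool) := (2 : ℝ≥0∞) • ((p.restrict {ε | ε 0 = b}).map σ) with hq
  have hqval : ∀ (B : Set (ℕ → Bool)), MeasurableSet B →
      q B = 2 * p (σ ⁻¹' B ∩ {ε | ε 0 = b}) := by
    intro B hB
    rw [hq, Measure.smul_apply, Measure.map_apply measurable_shift hB,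
      Measure.restrict_apply (measurable_shift hB), smul_eq_mul]
  have hpq : p = q := by
    refine MeasureTheory.ext_of_generate_finite Cyl generateFrom_Cyl.symm isPiSystem_Cyl ?_ ?_
    · rintro _ ⟨s, b', rfl⟩
      rw [hqval _ cyl_measurableSet]
      have hset : σ ⁻¹' {ε | ∀ i ∈ s, ε i = b' i} ∩ {ε | ε 0 = b} =
          {ε | ∀ i ∈ insert 0 (s.image (· + 1)),
            ε i = (fun i => if i = 0 then b else b' (i - 1)) i} := by
        ext ε
        simp only [Set.mem_inter_iff, Set.mem_preimage, Set.mem_setOf_eq, Finset.mem_insert,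
          Finset.mem_image]
        constructor
        · rintro ⟨h1, h2⟩ i hi
          rcases hi with rfl | ⟨j, hj, rfl⟩
          · simpa using h2
          · simpa using h1 j hj
        · intro h
          refine ⟨fun i hi => ?_, ?_⟩
          · have := h (i + 1) (Or.inr ⟨i, hi, rfl⟩)
            simpa using this
          · simpa using h 0 (Or.inl rfl)
      rw [hset, hp, hp]
      have hcard : (insert 0 (s.image (· + 1))).card = s.card + 1 := by
        rw [Finset.card_insert_of_notMem (by simp),
          Finset.card_image_of_injective _ (add_left_injective 1)]
      rw [hcard, pow_succ, mul_comm (2 : ℝ≥0∞), mul_assoc,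
        ENNReal.inv_mul_cancel (a := 2) (by simp) (by simp), mul_one]
    · rw [hqval _ MeasurableSet.univ, coin_univ hp]
      have : σ ⁻¹' Set.univ ∩ {ε : ℕ → Bool | ε 0 = b} = {ε : ℕ → Bool | ε 0 = b} := by
        simp
      rw [this]
      have : p {ε : ℕ → Bool | ε 0 = b} = 2⁻¹ := by
        have := hp {0} (fun _ => b)
        simpa using this
      rw [this, ENNReal.mul_inv_cancel (a := 2) (by simp) (by simp)]
  rw [Set.inter_comm]
  have h1 : p A = 2 * p (σ ⁻¹' A ∩ {ε | ε 0 = b}) := by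
    conv_lhs => rw [hpq]
    exact hqval A hA
  rw [h1, ← mul_assoc, ENNReal.inv_mul_cancel (a := 2) (by simp) (by simp), one_mul]

lemma coin_null {p : Measure (ℕ → Bool)} (hp : IsCoinMeasure p) :
    p {ε : ℕ → Bool | ∀ k, ε (k + 1) = true} = 0 := by
  by_contra h
  obtain ⟨n, hn⟩ := ENNReal.exists_inv_two_pow_lt h
  have hsub : {ε : ℕ → Bool | ∀ k, ε (k + 1) = true} ⊆
      {ε : ℕ → Bool | ∀ i ∈ (Finset.range n).image (· + 1), ε i = (fun _ => true) i} := by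
    intro ε hε i hi
    simp only [Finset.mem_image, Finset.mem_range] at hi
    obtain ⟨j, _, rfl⟩ := hi
    exact hε j
  have hle := measure_mono (μ := p) hsub
  rw [hp ((Finset.range n).image (· + 1)) (fun _ => true),
    Finset.card_image_of_injective _ (add_left_injective 1), Finset.card_range] at hle
  exact absurd (lt_of_le_of_lt hle hn) (lt_irrefl _)

lemma fract_fract_add (x y : ℝ) : Int.fract (Int.fract x + y) = Int.fract (x + y) := by
  have h : Int.fract x + y = x + y - (⌊x⌋ : ℤ) := by rw [Int.fract]; push_cast; ring
  rw [h, Int.fract_sub_intCast]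

lemma mem_rot {E : Set ℝ} (hE1 : E ⊆ Set.Ico 0 1) {y : ℝ} (hy : y ∈ Set.Ico (0:ℝ) 1) :
    y ∈ (fun x => Int.fract (x + gold⁻¹ ^ 2)) '' E ↔ Int.fract (y + gold⁻¹) ∈ E := by
  constructor
  · rintro ⟨e, he, rfl⟩
    have he' := hE1 he
    have : Int.fract (Int.fract (e + gold⁻¹ ^ 2) + gold⁻¹) = e := by
      rw [fract_fract_add]
      have h1 : e + gold⁻¹ ^ 2 + gold⁻¹ = e + 1 := by linarith [ginv_add_sq]
      rw [h1, Int.fract_add_one, Int.fract_eq_self.2 ⟨he'.1, he'.2⟩]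
    rw [this]; exact he
  · intro he
    refine ⟨Int.fract (y + gold⁻¹), he, ?_⟩
    show Int.fract (Int.fract (y + gold⁻¹) + gold⁻¹ ^ 2) = y
    rw [fract_fract_add]
    have h1 : y + gold⁻¹ + gold⁻¹ ^ 2 = y + 1 := by linarith [ginv_add_sq]
    rw [h1, Int.fract_add_one, Int.fract_eq_self.2 ⟨hy.1, hy.2⟩]

/-- For every Borel `E ⊆ [0,1)`, `μ(T⁻¹E) = (1/2)(μ(E) + μ(E + λ⁻² mod 1))`, where
`T x = {λ x}` on `[0,1)` and `E + λ⁻² mod 1` is the image of `E` under the rotation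
`x ↦ x + λ⁻² (mod 1)`. -/
theorem erdos_T_preimage (p : Measure (ℕ → Bool)) (hp : IsCoinMeasure p)
    (E : Set ℝ) (hE : MeasurableSet E) (hE1 : E ⊆ Set.Ico 0 1) :
    erdosOf p {x | x ∈ Set.Ico (0 : ℝ) 1 ∧ Int.fract (gold * x) ∈ E} =
      2⁻¹ * (erdosOf p E + erdosOf p ((fun x => Int.fract (x + gold⁻¹ ^ 2)) '' E)) := by
  set E' : Set ℝ := (fun x => Int.fract (x + gold⁻¹ ^ 2)) '' E with hE'def
  have hE'eq : E' = Set.Ico (0:ℝ) 1 ∩ (fun y => Int.fract (y + gold⁻¹)) ⁻¹' E := by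
    ext y
    constructor
    · rintro hy
      obtain ⟨e, _, rfl⟩ := hy
      have hy' : Int.fract (e + gold⁻¹ ^ 2) ∈ Set.Ico (0:ℝ) 1 :=
        ⟨Int.fract_nonneg _, Int.fract_lt_one _⟩
      exact ⟨hy', (mem_rot hE1 hy').1 (by exact ⟨e, ‹e ∈ E›, rfl⟩)⟩
    · rintro ⟨hy1, hy2⟩
      exact (mem_rot hE1 hy1).2 hy2
  have hE'meas : MeasurableSet E' := by
    rw [hE'eq]
    exact measurableSet_Ico.inter ((measurable_fract.comp (measurable_id.add_const _)) hE)
  set A : Set ℝ := {x | x ∈ Set.Ico (0 : ℝ) 1 ∧ Int.fract (gold * x) ∈ E} with hAdef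
  have hAmeas : MeasurableSet A := by
    have : A = Set.Ico (0:ℝ) 1 ∩ (fun x => Int.fract (gold * x)) ⁻¹' E := rfl
    rw [this]
    exact measurableSet_Ico.inter ((measurable_fract.comp (measurable_id.const_mul _)) hE)
  have hσ := measurable_shift
  simp only [erdosOf]
  rw [Measure.map_apply measurable_piMap hAmeas,
    Measure.map_apply measurable_piMap hE, Measure.map_apply measurable_piMap hE'meas]
  set σ : (ℕ → Bool) → (ℕ → Bool) := fun ε k => ε (k + 1) with hσdef
  set N : Set (ℕ → Bool) := {ε : ℕ → Bool | ∀ k, ε (k + 1) = true} with hNdef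
  have hN : p N = 0 := coin_null hp
  set S₀ : Set (ℕ → Bool) := {ε | ε 0 = false} ∩ σ ⁻¹' (piMap ⁻¹' E) with hS0def
  set S₁ : Set (ℕ → Bool) := {ε | ε 0 = true} ∩ σ ⁻¹' (piMap ⁻¹' E') with hS1def
  -- the key pointwise identity off N
  have hkey : piMap ⁻¹' A \ N = (S₀ ∪ S₁) \ N := by
    ext ε
    constructor
    · rintro ⟨hmem, hn⟩
      refine ⟨?_, hn⟩
      obtain ⟨j, hj⟩ : ∃ j, (σ ε) j = false := by
        by_contra hc
        push_neg at hc
        refine hn (fun k => ?_)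
        cases h : ε (k + 1)
        · exact absurd h (hc k)
        · rfl
      have hy1 : piMap (σ ε) < 1 := piMap_lt_one hj
      have hy0 : 0 ≤ piMap (σ ε) := piMap_nonneg _
      cases hb : ε 0
      · have hpe : piMap ε = gold⁻¹ * piMap (σ ε) := by
          rw [piMap_rec ε, hb]; simp [hσdef]
        have hfr : Int.fract (gold * piMap ε) = piMap (σ ε) := by
          rw [hpe, ← mul_assoc, mul_inv_cancel₀ g_ne, one_mul, Int.fract_eq_self.2 ⟨hy0, hy1⟩]
        obtain ⟨-, hfrE⟩ := hmem
        refine Or.inl ⟨hb, ?_⟩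
        show piMap (σ ε) ∈ E
        rw [← hfr]; exact hfrE
      · have hpe : piMap ε = gold⁻¹ ^ 2 + gold⁻¹ * piMap (σ ε) := by
          rw [piMap_rec ε, hb]; simp [hσdef]
        have hmul : gold * piMap ε = piMap (σ ε) + gold⁻¹ := by
          have hgg : gold * gold⁻¹ = 1 := mul_inv_cancel₀ g_ne
          rw [hpe]
          field_simp
          linear_combination piMap (σ ε) * hgg
        obtain ⟨-, hfrE⟩ := hmem
        refine Or.inr ⟨hb, ?_⟩
        show piMap (σ ε) ∈ E'
        rw [hmul] at hfrE
        exact (mem_rot hE1 ⟨hy0, hy1⟩).2 hfrE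
    · rintro ⟨hmem, hn⟩
      refine ⟨?_, hn⟩
      obtain ⟨j, hj⟩ : ∃ j, (σ ε) j = false := by
        by_contra hc
        push_neg at hc
        refine hn (fun k => ?_)
        cases h : ε (k + 1)
        · exact absurd h (hc k)
        · rfl
      have hy1 : piMap (σ ε) < 1 := piMap_lt_one hj
      have hy0 : 0 ≤ piMap (σ ε) := piMap_nonneg _
      rcases hmem with ⟨hb, hmE⟩ | ⟨hb, hmE⟩
      · have hpe : piMap ε = gold⁻¹ * piMap (σ ε) := by
          rw [piMap_rec ε, hb]; simp [hσdef]
        have hIco : piMap ε ∈ Set.Ico (0:ℝ) 1 := by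
          constructor
          · rw [hpe]; exact mul_nonneg ginv_pos.le hy0
          · rw [hpe]; nlinarith [ginv_lt_one, ginv_pos, hy1, hy0]
        have hfr : Int.fract (gold * piMap ε) = piMap (σ ε) := by
          rw [hpe, ← mul_assoc, mul_inv_cancel₀ g_ne, one_mul, Int.fract_eq_self.2 ⟨hy0, hy1⟩]
        exact ⟨hIco, by rw [hfr]; exact hmE⟩
      · have hpe : piMap ε = gold⁻¹ ^ 2 + gold⁻¹ * piMap (σ ε) := by
          rw [piMap_rec ε, hb]; simp [hσdef]
        have hIco : piMap ε ∈ Set.Ico (0:ℝ) 1 := by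
          constructor
          · rw [hpe]
            exact add_nonneg (pow_nonneg ginv_pos.le 2) (mul_nonneg ginv_pos.le hy0)
          · rw [hpe]; nlinarith [ginv_add_sq, hy1, ginv_pos, hy0]
        have hmul : gold * piMap ε = piMap (σ ε) + gold⁻¹ := by
          have hgg : gold * gold⁻¹ = 1 := mul_inv_cancel₀ g_ne
          rw [hpe]
          field_simp
          linear_combination piMap (σ ε) * hgg
        refine ⟨hIco, ?_⟩
        rw [hmul]
        exact (mem_rot hE1 ⟨hy0, hy1⟩).1 hmE
  have hfE : MeasurableSet (piMap ⁻¹' E) := measurable_piMap hE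
  have hfE' : MeasurableSet (piMap ⁻¹' E') := measurable_piMap hE'meas
  have hS1meas : MeasurableSet S₁ := by
    refine MeasurableSet.inter ?_ (measurable_shift hfE')
    have h2 : {ε : ℕ → Bool | ε 0 = true} = (fun f : ℕ → Bool => f 0) ⁻¹' {true} := rfl
    rw [h2]
    exact (measurable_pi_apply 0) (measurableSet_singleton true)
  have hdisj : Disjoint S₀ S₁ := by
    rw [Set.disjoint_left]
    rintro ε ⟨h0, -⟩ ⟨h1, -⟩
    rw [Set.mem_setOf_eq] at h1
    rw [Set.mem_setOf_eq] at h0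
    rw [h0] at h1
    exact Bool.false_ne_true h1
  calc p (piMap ⁻¹' A) = p (piMap ⁻¹' A \ N) := (measure_diff_null hN).symm
    _ = p ((S₀ ∪ S₁) \ N) := by rw [hkey]
    _ = p (S₀ ∪ S₁) := measure_diff_null hN
    _ = p S₀ + p S₁ := measure_union hdisj hS1meas
    _ = 2⁻¹ * p (piMap ⁻¹' E) + 2⁻¹ * p (piMap ⁻¹' E') := by
        rw [hS0def, hS1def, coin_shift hp false hfE, coin_shift hp true hfE']
    _ = 2⁻¹ * (p (piMap ⁻¹' E) + p (piMap ⁻¹' E')) := (mul_add _ _ _).symm
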